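/- arXiv:2406.00300 — 2 statements merged into one kernel-verified Lean document; each statement's English description precedes it below -/
import Mathlib

section
/- Let a > 0 and let h : ℝ → ℝ be continuously differentiable on [−a, a]. Suppose there exists x₀ ∈ (−a, a) with h(x₀) = 0. Then ∫_{−a}^{a} h(t)² dt ≤ (x₀² + a²)·∫_{−a}^{a} h'(t)² dt ≤ 2a²·∫_{−a}^{a} h'(t)² dt. -/
open intervalIntegral MeasureTheory

/-- Elementary Cauchy–Schwarz: `(∫ f)² ≤ (d - c) ∫ f²` for `f` continuous on `[c,d]`. -/
lemma cs_aux (c d : ℝ) (hcd : c ≤ d) (f : ℝ → ℝ) (hf : ContinuousOn f (Set.Icc c d)) :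
    (∫ t in c..d, f t) ^ 2 ≤ (d - c) * ∫ t in c..d, f t ^ 2 := by
  have huicc : Set.uIcc c d = Set.Icc c d := Set.uIcc_of_le hcd
  have hfi : IntervalIntegrable f MeasureTheory.volume c d :=
    (huicc ▸ hf : ContinuousOn f (Set.uIcc c d)).intervalIntegrable
  have hfi2 : IntervalIntegrable (fun t => f t ^ 2) MeasureTheory.volume c d :=
    (huicc ▸ (hf.pow 2) : ContinuousOn (fun t => f t ^ 2) (Set.uIcc c d)).intervalIntegrable
  rcases eq_or_lt_of_le hcd with rfl | hlt
  · simp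
  · set L : ℝ := d - c with hL
    have hLpos : 0 < L := by simp [hL]; linarith
    set A : ℝ := ∫ t in c..d, f t with hA
    have key : 0 ≤ ∫ t in c..d, (f t - A / L) ^ 2 :=
      intervalIntegral.integral_nonneg hcd (fun t _ => sq_nonneg _)
    have expand : (∫ t in c..d, (f t - A / L) ^ 2)
        = (∫ t in c..d, f t ^ 2) - 2 * (A / L) * A + (A / L) ^ 2 * L := by
      have : ∀ t, (f t - A / L) ^ 2 = f t ^ 2 - (2 * (A / L)) * f t + (A / L) ^ 2 := by
        intro t; ring
      simp_rw [this]
      rw [intervalIntegral.integral_add (hfi2.sub (hfi.const_mul _))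
          intervalIntegrable_const,
        intervalIntegral.integral_sub hfi2 (hfi.const_mul _),
        intervalIntegral.integral_const_mul, intervalIntegral.integral_const]
      simp [← hA, hL, smul_eq_mul]
      ring
    rw [expand] at key
    have h2 : A ^ 2 / L ≤ ∫ t in c..d, f t ^ 2 := by
      have : 2 * (A / L) * A - (A / L) ^ 2 * L = A ^ 2 / L := by
        field_simp; ring
      nlinarith [key]
    calc A ^ 2 = (A ^ 2 / L) * L := by field_simp
    _ ≤ (∫ t in c..d, f t ^ 2) * L := by
        exact mul_le_mul_of_nonneg_right h2 hLpos.le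
    _ = L * ∫ t in c..d, f t ^ 2 := mul_comm _ _

/-- For `h` continuously differentiable on `[−a, a]` with a zero `x₀ ∈ (−a, a)`,
`∫ h² ≤ (x₀² + a²)·∫ (h')² ≤ 2a²·∫ (h')²`. -/
theorem stmt6 (a : ℝ) (ha : 0 < a) (h h' : ℝ → ℝ)
    (hh' : ∀ t ∈ Set.Icc (-a) a, HasDerivAt h (h' t) t)
    (hc : ContinuousOn h' (Set.Icc (-a) a))
    (x₀ : ℝ) (hx₀ : x₀ ∈ Set.Ioo (-a) a) (hzero : h x₀ = 0) :
    (∫ t in (-a)..a, h t ^ 2) ≤ (x₀ ^ 2 + a ^ 2) * (∫ t in (-a)..a, h' t ^ 2) ∧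
    (x₀ ^ 2 + a ^ 2) * (∫ t in (-a)..a, h' t ^ 2) ≤ 2 * a ^ 2 * (∫ t in (-a)..a, h' t ^ 2) := by
  obtain ⟨hx₀l, hx₀r⟩ := hx₀
  have hle : (-a : ℝ) ≤ a := by linarith
  set I : ℝ := ∫ t in (-a)..a, h' t ^ 2 with hI
  have hInn : 0 ≤ I :=
    intervalIntegral.integral_nonneg hle (fun t _ => sq_nonneg _)
  -- integrability of h'^2 over [-a,a]
  have hsq_cont : ContinuousOn (fun t => h' t ^ 2) (Set.Icc (-a) a) := hc.pow 2
  have hsq_int : IntervalIntegrable (fun t => h' t ^ 2) MeasureTheory.volume (-a) a :=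
    (Set.uIcc_of_le hle ▸ hsq_cont : _).intervalIntegrable
  -- continuity of h on Icc
  have hcont : ContinuousOn h (Set.Icc (-a) a) :=
    fun t ht => ((hh' t ht).continuousAt).continuousWithinAt
  -- FTC: h x = ∫_{x₀}^x h' for x in Icc
  have hFTC : ∀ x ∈ Set.Icc (-a) a, h x = ∫ t in x₀..x, h' t := by
    intro x hx
    have hsub : Set.uIcc x₀ x ⊆ Set.Icc (-a) a := by
      apply Set.uIcc_subset_Icc ⟨hx₀l.le, hx₀r.le⟩ hx
    have := intervalIntegral.integral_eq_sub_of_hasDerivAt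
      (fun t ht => hh' t (hsub ht))
      ((hc.mono hsub).intervalIntegrable)
    rw [this, hzero, sub_zero]
  -- subinterval bound: for [c,d] ⊆ [-a,a], ∫_{c}^{d} h'^2 ≤ I
  have hsubI : ∀ c d : ℝ, -a ≤ c → c ≤ d → d ≤ a → (∫ t in c..d, h' t ^ 2) ≤ I := by
    intro c d h1 h2 h3
    exact intervalIntegral.integral_mono_interval h1 h2 h3
      (Filter.Eventually.of_forall fun t => sq_nonneg _) hsq_int
  -- pointwise bounds
  have hptR : ∀ x ∈ Set.Icc x₀ a, h x ^ 2 ≤ (x - x₀) * I := by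
    intro x hx
    have hxIcc : x ∈ Set.Icc (-a) a := ⟨by linarith [hx.1], hx.2⟩
    rw [hFTC x hxIcc]
    have hcs := cs_aux x₀ x hx.1 h' (hc.mono (Set.Icc_subset_Icc (by linarith) hx.2))
    refine hcs.trans ?_
    exact mul_le_mul_of_nonneg_left (hsubI x₀ x (by linarith) hx.1 hx.2)
      (by linarith [hx.1])
  have hptL : ∀ x ∈ Set.Icc (-a) x₀, h x ^ 2 ≤ (x₀ - x) * I := by
    intro x hx
    have hxIcc : x ∈ Set.Icc (-a) a := ⟨hx.1, by linarith [hx.2]⟩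
    rw [hFTC x hxIcc]
    have hcs := cs_aux x x₀ hx.2 h' (hc.mono (Set.Icc_subset_Icc hx.1 (by linarith)))
    have heq : (∫ t in x₀..x, h' t) ^ 2 = (∫ t in x..x₀, h' t) ^ 2 := by
      rw [intervalIntegral.integral_symm]; ring
    rw [heq]
    refine hcs.trans ?_
    exact mul_le_mul_of_nonneg_left (hsubI x x₀ hx.1 hx.2 hx₀r.le)
      (by linarith [hx.2])
  -- split the integral of h^2 at x₀
  have hh2_cont : ContinuousOn (fun t => h t ^ 2) (Set.Icc (-a) a) := hcont.pow 2
  have hh2_int : ∀ c d : ℝ, -a ≤ c → c ≤ d → d ≤ a →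
      IntervalIntegrable (fun t => h t ^ 2) MeasureTheory.volume c d := by
    intro c d h1 h2 h3
    apply ContinuousOn.intervalIntegrable
    rw [Set.uIcc_of_le h2]
    exact hh2_cont.mono (Set.Icc_subset_Icc h1 h3)
  have hsplit : (∫ t in (-a)..a, h t ^ 2)
      = (∫ t in (-a)..x₀, h t ^ 2) + ∫ t in x₀..a, h t ^ 2 := by
    rw [intervalIntegral.integral_add_adjacent_intervals
      (hh2_int _ _ le_rfl hx₀l.le hx₀r.le) (hh2_int _ _ hx₀l.le hx₀r.le le_rfl)]
  -- bound each piece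
  have hlin_int : ∀ c d : ℝ, IntervalIntegrable (fun x => (x₀ - x) * I) MeasureTheory.volume c d :=
    fun c d => (Continuous.intervalIntegrable (by fun_prop) c d)
  have hlin_int' : ∀ c d : ℝ, IntervalIntegrable (fun x => (x - x₀) * I) MeasureTheory.volume c d :=
    fun c d => (Continuous.intervalIntegrable (by fun_prop) c d)
  have hB1 : (∫ t in (-a)..x₀, h t ^ 2) ≤ ∫ x in (-a)..x₀, (x₀ - x) * I :=
    intervalIntegral.integral_mono_on hx₀l.le (hh2_int _ _ le_rfl hx₀l.le hx₀r.le)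
      (hlin_int _ _) hptL
  have hB2 : (∫ t in x₀..a, h t ^ 2) ≤ ∫ x in x₀..a, (x - x₀) * I :=
    intervalIntegral.integral_mono_on hx₀r.le (hh2_int _ _ hx₀l.le hx₀r.le le_rfl)
      (hlin_int' _ _) hptR
  have hC1 : (∫ x in (-a)..x₀, (x₀ - x) * I) = (x₀ + a) ^ 2 / 2 * I := by
    simp_rw [sub_mul]
    rw [intervalIntegral.integral_sub (Continuous.intervalIntegrable (by fun_prop) _ _)
      (Continuous.intervalIntegrable (by fun_prop) _ _)]
    simp [intervalIntegral.integral_const, mul_comm, intervalIntegral.integral_mul_const,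
      integral_id]
    ring
  have hC2 : (∫ x in x₀..a, (x - x₀) * I) = (a - x₀) ^ 2 / 2 * I := by
    simp_rw [sub_mul]
    rw [intervalIntegral.integral_sub (Continuous.intervalIntegrable (by fun_prop) _ _)
      (Continuous.intervalIntegrable (by fun_prop) _ _)]
    simp [intervalIntegral.integral_const, mul_comm, intervalIntegral.integral_mul_const,
      integral_id]
    ring
  constructor
  · rw [hsplit]
    calc (∫ t in (-a)..x₀, h t ^ 2) + ∫ t in x₀..a, h t ^ 2
        ≤ (x₀ + a) ^ 2 / 2 * I + (a - x₀) ^ 2 / 2 * I := by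
          rw [← hC1, ← hC2]; exact add_le_add hB1 hB2
    _ = (x₀ ^ 2 + a ^ 2) * I := by ring
  · have : x₀ ^ 2 + a ^ 2 ≤ 2 * a ^ 2 := by nlinarith
    exact mul_le_mul_of_nonneg_right this hInn
end

section
/- Let v : ℝ → ℝ be continuously differentiable on [−1, 1]. Then (∫_{−1}^1 v(t)⁴ dt)^{1/4} ≤ (∫_{−1}^1 v(t)² dt)^{1/2} + (∫_{−1}^1 v'(t)² dt)^{1/2}. -/
/-!
By the mean value theorem for integrals, `v c ^ 2` equals the mean of `v ^ 2` at some point `c`.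
Since `(v ^ 2)' = 2 v v'`, Cauchy–Schwarz then bounds `v ^ 2` everywhere by
`‖v‖₂² / ℓ + 2 ‖v‖₂ ‖v'‖₂`, where `ℓ` is the length of the interval. Hence
`‖v‖₄⁴ ≤ sup v² · ‖v‖₂² ≤ (‖v‖₂² + 2 ‖v‖₂ ‖v'‖₂) ‖v‖₂² ≤ (‖v‖₂ + ‖v'‖₂)⁴` as soon as `ℓ ≥ 1`.
-/

open MeasureTheory Set intervalIntegral
open scoped Interval

theorem integral_abs_mul_abs_le_sqrt_mul_sqrt {α : Type*} [MeasurableSpace α] {μ : Measure α}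
    {f g : α → ℝ} (hf : MemLp f 2 μ) (hg : MemLp g 2 μ) :
    ∫ x, |f x| * |g x| ∂μ ≤ √(∫ x, f x ^ 2 ∂μ) * √(∫ x, g x ^ 2 ∂μ) := by
  have h2 : ENNReal.ofReal 2 = 2 := by norm_num
  have := integral_mul_norm_le_Lp_mul_Lq (μ := μ) Real.HolderConjugate.two_two
    (h2 ▸ hf) (h2 ▸ hg)
  simpa only [Real.norm_eq_abs, Real.rpow_two, sq_abs, ← Real.sqrt_eq_rpow] using this

theorem rpow_one_div_four_le_sqrt_add_sqrt {Q I J L : ℝ} (hQ : 0 ≤ Q) (hI : 0 ≤ I) (hL : 1 ≤ L)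
    (hQI : Q ≤ (I / L + 2 * (√I * √J)) * I) :
    Q ^ ((1 : ℝ) / 4) ≤ √I + √J := by
  obtain ⟨A, hA, rfl⟩ : ∃ A, 0 ≤ A ∧ I = A ^ 2 :=
    ⟨√I, Real.sqrt_nonneg I, (Real.sq_sqrt hI).symm⟩
  rw [Real.sqrt_sq hA] at hQI ⊢
  have hB : 0 ≤ √J := Real.sqrt_nonneg J
  have hQ4 : Q ≤ (A + √J) ^ 4 :=
    calc Q ≤ (A ^ 2 / L + 2 * (A * √J)) * A ^ 2 := hQI
      _ ≤ (A ^ 2 + 2 * (A * √J)) * A ^ 2 := by gcongr; exact div_le_self (sq_nonneg A) hL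
      _ ≤ (A + √J) ^ 4 := by nlinarith [mul_nonneg hA hB, pow_nonneg hA 3, pow_nonneg hB 3]
  rw [one_div, Real.rpow_inv_le_iff_of_pos hQ (by positivity) four_pos]
  exact_mod_cast hQ4

section Interval

variable {a b : ℝ}

theorem ContinuousOn.memLp_two_restrict_Ioc {f : ℝ → ℝ} (hf : ContinuousOn f (Icc a b)) :
    MemLp f 2 (volume.restrict (Ioc a b)) :=
  (memLp_two_iff_integrable_sq
    ((hf.mono Ioc_subset_Icc_self).aestronglyMeasurable measurableSet_Ioc)).2
    ((hf.pow 2).integrableOn_Icc.mono_set Ioc_subset_Icc_self)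

theorem intervalIntegral.integral_abs_mul_abs_le_sqrt_mul_sqrt (hab : a ≤ b) {f g : ℝ → ℝ}
    (hf : ContinuousOn f (Icc a b)) (hg : ContinuousOn g (Icc a b)) :
    ∫ x in a..b, |f x| * |g x| ≤ √(∫ x in a..b, f x ^ 2) * √(∫ x in a..b, g x ^ 2) := by
  simp only [integral_of_le hab]
  exact _root_.integral_abs_mul_abs_le_sqrt_mul_sqrt hf.memLp_two_restrict_Ioc
    hg.memLp_two_restrict_Ioc

variable {v v' : ℝ → ℝ}

theorem sq_sub_sq_le_two_mul_integral_abs_mul (hab : a ≤ b)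
    (hv' : ∀ t ∈ Icc a b, HasDerivAt v (v' t) t) (hc : ContinuousOn v' (Icc a b)) {x y : ℝ}
    (hx : x ∈ Icc a b) (hy : y ∈ Icc a b) :
    v x ^ 2 - v y ^ 2 ≤ 2 * ∫ t in a..b, |v t| * |v' t| := by
  have hvc : ContinuousOn v (Icc a b) := HasDerivAt.continuousOn hv'
  have hyx : uIcc y x ⊆ Icc a b := uIcc_subset_Icc hy hx
  have hftc : ∫ t in y..x, 2 * v t * v' t = v x ^ 2 - v y ^ 2 :=
    integral_eq_sub_of_hasDerivAt (fun t ht => by simpa using (hv' t (hyx ht)).pow 2)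
      (((continuousOn_const.mul hvc).mul hc).mono hyx).intervalIntegrable
  have hint : IntegrableOn (fun t => |2 * v t * v' t|) (Ioc a b) :=
    (((continuousOn_const.mul hvc).mul hc).abs.integrableOn_Icc).mono_set Ioc_subset_Icc_self
  calc v x ^ 2 - v y ^ 2 = ∫ t in y..x, 2 * v t * v' t := hftc.symm
    _ ≤ ∫ t in Ι y x, |2 * v t * v' t| :=
      (le_abs_self _).trans (norm_integral_le_integral_norm_uIoc (f := fun t => 2 * v t * v' t))
    _ ≤ ∫ t in Ioc a b, |2 * v t * v' t| :=
      setIntegral_mono_set hint (ae_of_all _ fun t => abs_nonneg _)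
        (ae_of_all _ (Ioc_subset_Ioc (le_min hy.1 hx.1) (max_le hy.2 hx.2)))
    _ = 2 * ∫ t in a..b, |v t| * |v' t| := by
      rw [integral_of_le hab, ← MeasureTheory.integral_const_mul]
      simp only [abs_mul, abs_two, mul_assoc]

theorem sq_le_integral_sq_div_add (hab : a < b)
    (hv' : ∀ t ∈ Icc a b, HasDerivAt v (v' t) t) (hc : ContinuousOn v' (Icc a b)) {x : ℝ}
    (hx : x ∈ Icc a b) :
    v x ^ 2 ≤ (∫ t in a..b, v t ^ 2) / (b - a) +
      2 * (√(∫ t in a..b, v t ^ 2) * √(∫ t in a..b, v' t ^ 2)) := by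
  have hvc : ContinuousOn v (Icc a b) := HasDerivAt.continuousOn hv'
  obtain ⟨c, hc_mem, hc_avg⟩ :=
    exists_eq_interval_average hab.ne (f := fun t => v t ^ 2)
      (by rw [uIcc_of_le hab.le]; exact hvc.pow 2)
  rw [interval_average_eq_div] at hc_avg
  have hcI : c ∈ Icc a b := by
    rw [← uIcc_of_le hab.le]; exact uIoo_subset_uIcc_self hc_mem
  have := sq_sub_sq_le_two_mul_integral_abs_mul hab.le hv' hc hx hcI
  have := integral_abs_mul_abs_le_sqrt_mul_sqrt hab.le hvc hc
  linarith

theorem integral_pow_four_le_mul_integral_sq (hab : a ≤ b) (hvc : ContinuousOn v (Icc a b))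
    {M : ℝ} (hM : ∀ x ∈ Icc a b, v x ^ 2 ≤ M) :
    ∫ t in a..b, v t ^ 4 ≤ M * ∫ t in a..b, v t ^ 2 := by
  rw [← intervalIntegral.integral_const_mul]
  refine integral_mono_on hab ((hvc.pow 4).intervalIntegrable_of_Icc hab)
    ((continuousOn_const.mul (hvc.pow 2)).intervalIntegrable_of_Icc hab) fun x hx => ?_
  nlinarith [hM x hx, sq_nonneg (v x)]

theorem rpow_integral_pow_four_le_sqrt_add_sqrt (hab : 1 ≤ b - a)
    (hv' : ∀ t ∈ Icc a b, HasDerivAt v (v' t) t) (hc : ContinuousOn v' (Icc a b)) :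
    (∫ t in a..b, v t ^ 4) ^ ((1 : ℝ) / 4) ≤
      √(∫ t in a..b, v t ^ 2) + √(∫ t in a..b, v' t ^ 2) := by
  have hab' : a < b := by linarith
  exact rpow_one_div_four_le_sqrt_add_sqrt (integral_nonneg hab'.le fun t _ => by positivity)
    (integral_nonneg hab'.le fun t _ => sq_nonneg _) hab
    (integral_pow_four_le_mul_integral_sq hab'.le (HasDerivAt.continuousOn hv')
      fun x hx => sq_le_integral_sq_div_add hab' hv' hc hx)

end Interval

/-- For `v` continuously differentiable on `[−1, 1]`,
`‖v‖_{L⁴} ≤ ‖v‖_{L²} + ‖v'‖_{L²}`. -/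
theorem stmt10 (v v' : ℝ → ℝ)
    (hv' : ∀ t ∈ Set.Icc (-1 : ℝ) 1, HasDerivAt v (v' t) t)
    (hc : ContinuousOn v' (Set.Icc (-1 : ℝ) 1)) :
    (∫ t in (-1 : ℝ)..1, v t ^ 4) ^ ((1 : ℝ) / 4) ≤
      Real.sqrt (∫ t in (-1 : ℝ)..1, v t ^ 2) + Real.sqrt (∫ t in (-1 : ℝ)..1, v' t ^ 2) :=
  rpow_integral_pow_four_le_sqrt_add_sqrt (by norm_num) hv' hc
end
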